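/- arXiv:2509.13717 — 3 statements merged into one kernel-verified Lean document; each statement's English description precedes it below -/
import Mathlib

section
/- Let (X_1,U_1),...,(X_n,U_n),(X_{n+1},U_{n+1}) be i.i.d. random pairs with values in ℝ^d × ℝ, let u_θ : ℝ^d → ℝ be a fixed measurable predictor, and fix α ∈ (0,1) with k := ⌈(1−α)(n+1)⌉ ≤ n. Define nonconformity scores r_i = |U_i − u_θ(X_i)| for i = 1,...,n and let q be the k-th smallest value among r_1,...,r_n. Then the vanilla conformal prediction interval I(x) = [u_θ(x) − q, u_θ(x) + q] satisfies P( U_{n+1} ∈ I(X_{n+1}) ) ≥ 1 − α. -/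
open MeasureTheory ProbabilityTheory

/-- The `k`-th smallest value among `f 0, ..., f (n-1)` (the `k`-th order statistic). -/
noncomputable def kthSmallest {n : ℕ} (k : ℕ) (f : Fin n → ℝ) : ℝ :=
  sInf {t : ℝ | k ≤ (Finset.univ.filter fun i => f i ≤ t).card}

/-! The residuals of the `n + 1` pairs are i.i.d., so their joint law is invariant under
permutations of the indices. In any `n + 1` reals at least `k` entries have fewer than `k`
entries strictly below them; by exchangeability the test index has this property with
probability at least `k / (n + 1) ≥ 1 - α`. When it does, the test residual is at most the
`k`-th smallest calibration residual, which is exactly coverage of the interval. -/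

open scoped Finset ENNReal

section StrictRank
variable {ι α : Type*} [Fintype ι] [LinearOrder α]

def strictRank (x : ι → α) (j : ι) : ℕ := #{i | x i < x j}

theorem le_card_strictRank_lt {k : ℕ} (x : ι → α) (hk : k ≤ Fintype.card ι) :
    k ≤ #{j | strictRank x j < k} := by
  by_contra! hT
  have hne : (Finset.univ.filter fun j => ¬strictRank x j < k).Nonempty := by
    rw [← Finset.card_pos]
    have := Finset.card_filter_add_card_filter_not (s := Finset.univ)
      fun j => strictRank x j < k
    rw [Finset.card_univ] at this
    omega
  -- Everything strictly below a smallest entry of rank `≥ k` has rank `< k`.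
  obtain ⟨j, hj, hmin⟩ := Finset.exists_min_image _ x hne
  refine (Finset.mem_filter.mp hj).2 (lt_of_le_of_lt (Finset.card_le_card fun i hi => ?_) hT)
  simp only [Finset.mem_filter, Finset.mem_univ, true_and] at hi hmin ⊢
  by_contra hik
  exact (hmin i hik).not_gt hi

theorem strictRank_comp_perm (x : ι → α) (σ : Equiv.Perm ι) (j : ι) :
    strictRank (x ∘ σ) j = strictRank x (σ j) :=
  Finset.card_equiv σ (by simp)

end StrictRank

theorem le_kthSmallest_of_strictRank_lt {n k : ℕ} (hkn : k ≤ n) (x : Fin (n + 1) → ℝ)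
    (h : strictRank x (Fin.last n) < k) :
    x (Fin.last n) ≤ kthSmallest k fun i : Fin n => x i.castSucc := by
  obtain ⟨b, hb⟩ := (Set.finite_range x).bddAbove
  refine le_csInf ⟨b, ?_⟩ fun t ht => ?_
  · rw [Set.mem_ofPred_eq, Finset.filter_true_of_mem fun i _ => hb ⟨i.castSucc, rfl⟩]
    simpa using hkn
  · by_contra! hlt
    have : #{i : Fin n | x i.castSucc ≤ t} ≤ strictRank x (Fin.last n) :=
      Finset.card_le_card_of_injOn Fin.castSucc
        (fun i hi => by
          simp only [Finset.coe_filter, Finset.mem_univ, true_and, Set.mem_ofPred_eq] at hi ⊢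
          linarith)
        (Fin.castSucc_injective n).injOn
    exact absurd (ht.trans this) (by omega)

namespace MeasureTheory

open Classical in
theorem natCast_mul_measure_univ_le_sum_measure {ι Ω : Type*} [Fintype ι] [MeasurableSpace Ω]
    (μ : Measure Ω) {A : ι → Set Ω} (hA : ∀ i, MeasurableSet (A i)) {k : ℕ}
    (h : ∀ ω, k ≤ #{i | ω ∈ A i}) :
    k * μ Set.univ ≤ ∑ i, μ (A i) := by
  have hcount : ∀ ω, (k : ℝ≥0∞) ≤ ∑ i, (A i).indicator 1 ω := fun ω => by
    simp only [Set.indicator_apply, Pi.one_apply, Finset.sum_boole]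
    exact_mod_cast h ω
  calc k * μ Set.univ = ∫⁻ _, (k : ℝ≥0∞) ∂μ := by rw [lintegral_const, mul_comm]
    _ ≤ ∫⁻ ω, ∑ i, (A i).indicator 1 ω ∂μ := lintegral_mono hcount
    _ = ∑ i, μ (A i) := by
      rw [lintegral_finsetSum _ fun i _ => measurable_one.indicator (hA i)]
      simp_rw [lintegral_indicator_one (hA _)]

theorem measurePreserving_comp_perm_pi {ι α : Type*} [Fintype ι] [MeasurableSpace α]
    (ν : Measure α) [SigmaFinite ν] (σ : Equiv.Perm ι) :
    MeasurePreserving (fun x : ι → α => x ∘ σ)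
      (Measure.pi fun _ => ν) (Measure.pi fun _ => ν) := by
  convert measurePreserving_piCongrLeft (fun _ : ι => ν) σ.symm using 1
  ext x i
  simp [MeasurableEquiv.coe_piCongrLeft, Equiv.piCongrLeft_apply_eq_cast]

section Exchangeable
variable {ι α : Type*} [Fintype ι] [LinearOrder α] [MeasurableSpace α] [TopologicalSpace α]
  [OrderClosedTopology α] [OpensMeasurableSpace α] [SecondCountableTopology α]

theorem measurableSet_strictRank_lt (j : ι) (k : ℕ) :
    MeasurableSet {x : ι → α | strictRank x j < k} := by
  have : Measurable fun x : ι → α => strictRank x j := by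
    simp only [strictRank, Finset.card_filter]
    exact Finset.measurable_sum _ fun i _ =>
      Measurable.ite (measurableSet_lt (measurable_pi_apply i) (measurable_pi_apply j))
        measurable_const measurable_const
  exact this (measurableSet_Iio (a := k))

theorem measure_strictRank_lt_eq {μ : Measure (ι → α)}
    (hμ : ∀ σ : Equiv.Perm ι, MeasurePreserving (fun x => x ∘ σ) μ μ) (k : ℕ)
    (i j : ι) : μ {x | strictRank x i < k} = μ {x | strictRank x j < k} := by
  classical
  have hpre : (fun x : ι → α => x ∘ Equiv.swap i j) ⁻¹' {x | strictRank x j < k} =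
      {x | strictRank x i < k} := by
    ext x
    simp [strictRank_comp_perm]
  rw [← hpre, (hμ _).measure_preimage (measurableSet_strictRank_lt j k).nullMeasurableSet]

theorem natCast_le_card_mul_measure_strictRank_lt {μ : Measure (ι → α)}
    [IsProbabilityMeasure μ]
    (hμ : ∀ σ : Equiv.Perm ι, MeasurePreserving (fun x => x ∘ σ) μ μ) {k : ℕ}
    (hk : k ≤ Fintype.card ι) (j : ι) :
    (k : ℝ≥0∞) ≤ Fintype.card ι * μ {x | strictRank x j < k} := by
  classical
  calc (k : ℝ≥0∞) = k * μ Set.univ := by rw [measure_univ, mul_one]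
    _ ≤ ∑ i, μ {x | strictRank x i < k} :=
      natCast_mul_measure_univ_le_sum_measure μ (fun i => measurableSet_strictRank_lt i k)
        fun x => by simpa using le_card_strictRank_lt x hk
    _ = Fintype.card ι * μ {x | strictRank x j < k} := by
      simp [measure_strictRank_lt_eq hμ k _ j]

end Exchangeable

end MeasureTheory

theorem ProbabilityTheory.iIndepFun.map_fun_eq_pi_of_identDistrib {Ω ι β : Type*}
    [MeasurableSpace Ω] [MeasurableSpace β] [Fintype ι] {P : Measure Ω}
    [IsProbabilityMeasure P] {Y : ι → Ω → β} (hY : ∀ i, AEMeasurable (Y i) P)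
    (hind : iIndepFun Y P) {j : ι} (hid : ∀ i, IdentDistrib (Y i) (Y j) P P) :
    P.map (fun ω i => Y i ω) = Measure.pi fun _ => P.map (Y j) := by
  rw [hind.map_fun_eq_pi_map hY]
  exact congrArg _ (funext fun i => (hid i).map_eq)

theorem vanilla_cp_coverage_general
    {Ω : Type*} [MeasurableSpace Ω] (P : Measure Ω) [IsProbabilityMeasure P]
    {d n : ℕ}
    (X : Fin (n + 1) → Ω → (Fin d → ℝ)) (U : Fin (n + 1) → Ω → ℝ)
    (hmeas : ∀ i, Measurable fun ω => (X i ω, U i ω))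
    (hindep : iIndepFun (fun i ω => (X i ω, U i ω)) P)
    (hid : ∀ i j, IdentDistrib (fun ω => (X i ω, U i ω)) (fun ω => (X j ω, U j ω)) P P)
    (uθ : (Fin d → ℝ) → ℝ) (huθ : Measurable uθ)
    (α : ℝ)
    (k : ℕ) (hk : k = ⌈(1 - α) * (n + 1 : ℝ)⌉₊) (hkn : k ≤ n)
    (q : Ω → ℝ)
    (hq : ∀ ω, q ω =
      kthSmallest k (fun i : Fin n => |U i.castSucc ω - uθ (X i.castSucc ω)|)) :
    ENNReal.ofReal (1 - α) ≤
      P {ω | uθ (X (Fin.last n) ω) - q ω ≤ U (Fin.last n) ω ∧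
             U (Fin.last n) ω ≤ uθ (X (Fin.last n) ω) + q ω} := by
  have hφ : Measurable fun p : (Fin d → ℝ) × ℝ => |p.2 - uθ p.1| := by fun_prop
  set V : Ω → Fin (n + 1) → ℝ := fun ω i => |U i ω - uθ (X i ω)|
  have hV : Measurable V := measurable_pi_lambda _ fun i => hφ.comp (hmeas i)
  have : IsProbabilityMeasure (P.map V) := Measure.isProbabilityMeasure_map hV.aemeasurable
  have hlaw : P.map V = Measure.pi fun _ => P.map fun ω => V ω (Fin.last n) :=
    (hindep.comp _ fun _ => hφ).map_fun_eq_pi_of_identDistrib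
      (fun i => (hφ.comp (hmeas i)).aemeasurable) fun i => (hid i (Fin.last n)).comp hφ
  have hexch : ∀ σ : Equiv.Perm (Fin (n + 1)),
      MeasurePreserving (· ∘ σ) (P.map V) (P.map V) := by
    rw [hlaw]
    exact measurePreserving_comp_perm_pi _
  have hrank : (k : ℝ≥0∞) ≤ (n + 1) * P.map V {x | strictRank x (Fin.last n) < k} := by
    simpa using natCast_le_card_mul_measure_strictRank_lt hexch
      (show k ≤ Fintype.card (Fin (n + 1)) by simp; omega) (Fin.last n)
  have hquantile : (n + 1) * ENNReal.ofReal (1 - α) ≤ k := by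
    have hn : ((n : ℝ≥0∞) + 1) = ENNReal.ofReal (n + 1) := by norm_cast
    rw [← ENNReal.ofReal_natCast k, hn, ← ENNReal.ofReal_mul (by positivity), mul_comm, hk]
    exact ENNReal.ofReal_le_ofReal (Nat.le_ceil _)
  have hcover : V ⁻¹' {x | strictRank x (Fin.last n) < k} ⊆
      {ω | uθ (X (Fin.last n) ω) - q ω ≤ U (Fin.last n) ω ∧
        U (Fin.last n) ω ≤ uθ (X (Fin.last n) ω) + q ω} := fun ω hω => by
    have := le_kthSmallest_of_strictRank_lt hkn _ hω
    rw [← hq] at this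
    constructor <;> linarith [abs_le.mp this]
  calc ENNReal.ofReal (1 - α) ≤ P.map V {x | strictRank x (Fin.last n) < k} :=
        (ENNReal.mul_le_mul_iff_right (by positivity) (by simp)).mp (hquantile.trans hrank)
    _ = P (V ⁻¹' {x | strictRank x (Fin.last n) < k}) :=
        Measure.map_apply hV (measurableSet_strictRank_lt _ _)
    _ ≤ _ := measure_mono hcover

/-- **Vanilla conformal prediction coverage.**  If `(X i, U i)`, `i = 0, …, n`, are i.i.d.
pairs, `uθ` is a fixed measurable predictor, `α ∈ (0,1)`, `k = ⌈(1-α)(n+1)⌉ ≤ n`,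
`q` is the `k`-th smallest of the calibration residuals `|U i - uθ (X i)|`, then the interval
`[uθ x - q, uθ x + q]` covers the test response with probability at least `1 - α`. -/
theorem vanilla_cp_coverage
    {Ω : Type*} [MeasurableSpace Ω] (P : Measure Ω) [IsProbabilityMeasure P]
    {d n : ℕ}
    (X : Fin (n + 1) → Ω → (Fin d → ℝ)) (U : Fin (n + 1) → Ω → ℝ)
    (hmeas : ∀ i, Measurable fun ω => (X i ω, U i ω))
    (hindep : iIndepFun (fun i ω => (X i ω, U i ω)) P)
    (hid : ∀ i j, IdentDistrib (fun ω => (X i ω, U i ω)) (fun ω => (X j ω, U j ω)) P P)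
    (uθ : (Fin d → ℝ) → ℝ) (huθ : Measurable uθ)
    (α : ℝ) (hα : α ∈ Set.Ioo (0 : ℝ) 1)
    (k : ℕ) (hk : k = ⌈(1 - α) * (n + 1 : ℝ)⌉₊) (hkn : k ≤ n)
    (q : Ω → ℝ)
    (hq : ∀ ω, q ω =
      kthSmallest k (fun i : Fin n => |U i.castSucc ω - uθ (X i.castSucc ω)|)) :
    ENNReal.ofReal (1 - α) ≤
      P {ω | uθ (X (Fin.last n) ω) - q ω ≤ U (Fin.last n) ω ∧
             U (Fin.last n) ω ≤ uθ (X (Fin.last n) ω) + q ω} :=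
  vanilla_cp_coverage_general P X U hmeas hindep hid uθ huθ α k hk hkn q hq
end

section
/- Let (X_1,U_1),...,(X_n,U_n),(X_{n+1},U_{n+1}) be i.i.d. random pairs with values in ℝ^d × ℝ, let u_θ : ℝ^d → ℝ be a fixed measurable predictor, let σ : ℝ^d → ℝ be a fixed measurable function with σ(x) > 0 for all x, and fix α ∈ (0,1) with k := ⌈(1−α)(n+1)⌉ ≤ n. Define s_i = |U_i − u_θ(X_i)| / σ(X_i), let q be the k-th smallest value among s_1,...,s_n, and let I(x) = [u_θ(x) − q σ(x), u_θ(x) + q σ(x)]. If the common distribution of the scaled score s = |U − u_θ(X)| / σ(X) is atomless (continuous), then P( U_{n+1} ∈ I(X_{n+1}) ) ≤ 1 − α + 1/(n+1). -/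
open MeasureTheory ProbabilityTheory

/-!
Write `s_i` for the scaled scores and `R_i = #{m | s_m ≤ s_i}` for their ranks. The score vector
is i.i.d., so its law is a product measure, invariant under permutations of the coordinates, and
all `R_i` have the same law. At most `k` indices can have rank `≤ k`, hence
`(n + 1) P(R_{n+1} ≤ k) ≤ k`. Ties have probability zero, and without ties
`s_{n+1} ≤ q` forces `R_{n+1} ≤ k`; finally `k / (n + 1) ≤ 1 - α + 1 / (n + 1)`.
-/

open Finset

section Rank

variable {ι α : Type*} [Fintype ι] [LinearOrder α]

def rank (x : ι → α) (i : ι) : ℕ := #{m | x m ≤ x i}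

lemma rank_comp_equiv {κ : Type*} [Fintype κ] (x : ι → α) (e : κ ≃ ι) (j : κ) :
    rank (x ∘ e) j = rank x (e j) :=
  card_equiv e fun m => by simp

lemma card_filter_rank_le (x : ι → α) (k : ℕ) : #{i | rank x i ≤ k} ≤ k := by
  rcases (univ.filter fun i => rank x i ≤ k).eq_empty_or_nonempty with h | hne
  · simp [h]
  obtain ⟨i, hi, hmax⟩ := exists_max_image _ x hne
  calc #{i | rank x i ≤ k} ≤ rank x i := card_le_card fun m hm => by simpa using hmax m hm
    _ ≤ k := (mem_filter.mp hi).2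

lemma measurable_rank (i : ι) :
    Measurable fun x : ι → ℝ => rank x i := by
  simp only [rank, card_filter]
  exact Finset.measurable_sum _ fun m _ =>
    Measurable.ite (measurableSet_le (measurable_pi_apply m) (measurable_pi_apply i))
      measurable_const measurable_const

lemma measure_pi_rank_le_le (μ : Measure ℝ) [IsProbabilityMeasure μ] (i : ι) (k : ℕ) :
    Fintype.card ι * Measure.pi (fun _ : ι => μ) {x | rank x i ≤ k} ≤ k := by
  classical
  set ν := Measure.pi (fun _ : ι => μ)
  have hmeas : ∀ j, MeasurableSet {x : ι → ℝ | rank x j ≤ k} :=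
    fun j => measurable_rank j measurableSet_Iic
  have hperm : ∀ j, ν {x | rank x j ≤ k} = ν {x | rank x i ≤ k} := fun j => by
    have hswap := (measurePreserving_piCongrLeft (fun _ : ι => μ) (Equiv.swap i j)).symm
    rw [← hswap.measure_preimage (hmeas i).nullMeasurableSet]
    congr 1
    ext x
    change rank x j ≤ k ↔ rank (x ∘ Equiv.swap i j) i ≤ k
    rw [rank_comp_equiv, Equiv.swap_apply_left]
  calc (Fintype.card ι : ENNReal) * ν {x | rank x i ≤ k}
      = ∑ j, ν {x | rank x j ≤ k} := by simp [hperm]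
    _ = ∫⁻ x, ∑ j, {x : ι → ℝ | rank x j ≤ k}.indicator 1 x ∂ν := by
        rw [lintegral_finsetSum _ fun j _ => measurable_one.indicator (hmeas j)]
        simp [lintegral_indicator_one (hmeas _)]
    _ ≤ ∫⁻ _, (k : ENNReal) ∂ν := lintegral_mono fun x => by
        simp only [Set.indicator_apply, Pi.one_apply]
        rw [Finset.sum_boole]
        exact_mod_cast card_filter_rank_le x k
    _ = k := by simp

end Rank

lemma card_filter_lt_lt_of_le_kthSmallest {n k : ℕ} (hk : 0 < k) (f : Fin n → ℝ) {t : ℝ}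
    (ht : t ≤ kthSmallest k f) : #{i | f i < t} < k := by
  by_contra! hkt
  obtain ⟨i, hi, hmax⟩ := exists_max_image _ f (card_pos.mp (hk.trans_le hkt))
  have hmem : f i ∈ {u : ℝ | k ≤ #{m | f m ≤ u}} :=
    hkt.trans (card_le_card fun m hm => by simpa using hmax m hm)
  obtain ⟨b, hb⟩ := (Set.finite_range f).bddBelow
  have hbdd : BddBelow {u : ℝ | k ≤ #{m | f m ≤ u}} := ⟨b, fun u hu => by
    obtain ⟨m, hm⟩ := card_pos.mp (hk.trans_le hu)
    exact (hb ⟨m, rfl⟩).trans (mem_filter.mp hm).2⟩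
  have hle : kthSmallest k f ≤ f i := csInf_le hbdd hmem
  have hlt : f i < t := (mem_filter.mp hi).2
  linarith

lemma rank_last_eq {n : ℕ} (x : Fin (n + 1) → ℝ)
    (hx : ∀ i : Fin n, x i.castSucc ≠ x (Fin.last n)) :
    rank x (Fin.last n) = #{i : Fin n | x i.castSucc < x (Fin.last n)} + 1 := by
  rw [rank, card_filter, Fin.sum_univ_castSucc, if_pos le_rfl, ← card_filter]
  congr 2
  ext i
  simp [le_iff_lt_or_eq, hx i]

lemma rank_last_le_of_le_kthSmallest {n k : ℕ} (hk : 0 < k) (x : Fin (n + 1) → ℝ)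
    (hx : ∀ i : Fin n, x i.castSucc ≠ x (Fin.last n))
    (hle : x (Fin.last n) ≤ kthSmallest k fun i => x i.castSucc) :
    rank x (Fin.last n) ≤ k := by
  rw [rank_last_eq x hx]
  exact card_filter_lt_lt_of_le_kthSmallest hk _ hle

lemma measure_eq_eq_zero_of_indepFun {Ω : Type*} [MeasurableSpace Ω] {P : Measure Ω}
    [IsProbabilityMeasure P] {Y Z : Ω → ℝ} (hY : Measurable Y) (hZ : Measurable Z)
    (hYZ : IndepFun Y Z P) (hZ0 : ∀ c, P {ω | Z ω = c} = 0) :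
    P {ω | Y ω = Z ω} = 0 := by
  have hdiag : MeasurableSet {p : ℝ × ℝ | p.1 = p.2} :=
    measurableSet_eq_fun measurable_fst measurable_snd
  have hlaw := (indepFun_iff_map_prod_eq_prod_map_map hY.aemeasurable hZ.aemeasurable).mp hYZ
  change P ((fun ω => (Y ω, Z ω)) ⁻¹' {p : ℝ × ℝ | p.1 = p.2}) = 0
  rw [← Measure.map_apply (hY.prodMk hZ) hdiag, hlaw, Measure.prod_apply hdiag]
  have hatom : ∀ y, P.map Z {y} = 0 := fun y => by
    rw [Measure.map_apply hZ (measurableSet_singleton y)]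
    exact hZ0 y
  simp [hatom]

lemma map_eq_pi_of_iIndepFun_of_identDistrib {Ω ι β : Type*} [MeasurableSpace Ω]
    [MeasurableSpace β] {P : Measure Ω} [Fintype ι] {f : ι → Ω → β}
    (hf : ∀ i, Measurable (f i)) (hindep : iIndepFun f P) (j : ι)
    (hid : ∀ i, IdentDistrib (f i) (f j) P P) :
    P.map (fun ω i => f i ω) = Measure.pi fun _ => P.map (f j) := by
  rw [hindep.map_fun_eq_pi_map fun i => (hf i).aemeasurable]
  simp_rw [(hid _).map_eq]

lemma natCeil_mul_div_le {n : ℕ} {a : ℝ} (ha : 0 ≤ a) :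
    (⌈a * (n + 1)⌉₊ : ENNReal) / (n + 1) ≤ ENNReal.ofReal (a + 1 / (n + 1)) := by
  have hn : (0 : ℝ) < n + 1 := by positivity
  have hceil := Nat.ceil_lt_add_one (by positivity : 0 ≤ a * (n + 1))
  have : (⌈a * (n + 1)⌉₊ : ℝ) / (n + 1) ≤ a + 1 / (n + 1) := by
    rw [div_le_iff₀ hn, add_mul, one_div_mul_cancel hn.ne']; exact hceil.le
  calc (⌈a * (n + 1)⌉₊ : ENNReal) / (n + 1)
      = ENNReal.ofReal ((⌈a * (n + 1)⌉₊ : ℝ) / (n + 1)) := by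
        rw [ENNReal.ofReal_div_of_pos hn]; norm_cast
    _ ≤ _ := ENNReal.ofReal_le_ofReal this

lemma succ_mul_measure_le_kthSmallest_le {Ω : Type*} [MeasurableSpace Ω] {P : Measure Ω}
    [IsProbabilityMeasure P] {n k : ℕ} (hk : 0 < k) {s : Fin (n + 1) → Ω → ℝ}
    (hs : ∀ i, Measurable (s i)) (hindep : iIndepFun s P)
    (hid : ∀ i, IdentDistrib (s i) (s (Fin.last n)) P P)
    (hatom : ∀ c, P {ω | s (Fin.last n) ω = c} = 0) :
    (n + 1 : ENNReal) * P {ω | s (Fin.last n) ω ≤ kthSmallest k fun i => s i.castSucc ω}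
      ≤ k := by
  set ties := ⋃ i : Fin n, {ω | s i.castSucc ω = s (Fin.last n) ω}
  set scores : Ω → Fin (n + 1) → ℝ := fun ω i => s i ω
  have hties : P ties = 0 := measure_iUnion_null fun i =>
    measure_eq_eq_zero_of_indepFun (hs _) (hs _) (hindep.indepFun (Fin.castSucc_lt_last i).ne) hatom
  have hcover : {ω | s (Fin.last n) ω ≤ kthSmallest k fun i => s i.castSucc ω}
      ⊆ scores ⁻¹' {x | rank x (Fin.last n) ≤ k} ∪ ties := by
    intro ω hle
    by_cases htie : ω ∈ ties
    · exact Or.inr htie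
    exact Or.inl (rank_last_le_of_le_kthSmallest hk _
      (fun i h => htie (Set.mem_iUnion.mpr ⟨i, h⟩)) hle)
  have := Measure.isProbabilityMeasure_map (μ := P) (hs (Fin.last n)).aemeasurable
  have hrank_meas : MeasurableSet {x : Fin (n + 1) → ℝ | rank x (Fin.last n) ≤ k} :=
    measurable_rank _ measurableSet_Iic
  calc (n + 1 : ENNReal) * P {ω | s (Fin.last n) ω ≤ kthSmallest k fun i => s i.castSucc ω}
      ≤ (n + 1 : ENNReal) * (P (scores ⁻¹' {x | rank x (Fin.last n) ≤ k}) + P ties) :=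
        by gcongr; exact (measure_mono hcover).trans (measure_union_le _ _)
    _ = (n + 1 : ENNReal) * P.map scores {x | rank x (Fin.last n) ≤ k} := by
        rw [hties, add_zero, Measure.map_apply (measurable_pi_lambda _ hs) hrank_meas]
    _ ≤ k := by
        rw [map_eq_pi_of_iIndepFun_of_identDistrib hs hindep (Fin.last n) hid]
        simpa using measure_pi_rank_le_le (P.map (s (Fin.last n))) (Fin.last n) k

theorem scaled_cp_upper_coverage_general
    {Ω : Type*} [MeasurableSpace Ω] (P : Measure Ω) [IsProbabilityMeasure P]
    {d n : ℕ}
    (X : Fin (n + 1) → Ω → (Fin d → ℝ)) (U : Fin (n + 1) → Ω → ℝ)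
    (hmeas : ∀ i, Measurable fun ω => (X i ω, U i ω))
    (hindep : iIndepFun (fun i ω => (X i ω, U i ω)) P)
    (hid : ∀ i j, IdentDistrib (fun ω => (X i ω, U i ω)) (fun ω => (X j ω, U j ω)) P P)
    (uθ : (Fin d → ℝ) → ℝ) (huθ : Measurable uθ)
    (σ : (Fin d → ℝ) → ℝ) (hσmeas : Measurable σ) (hσpos : ∀ x, 0 < σ x)
    (hatomless : ∀ (i : Fin (n + 1)) (c : ℝ),
      P {ω | |U i ω - uθ (X i ω)| / σ (X i ω) = c} = 0)
    (α : ℝ) (hα : α ∈ Set.Ioo (0 : ℝ) 1)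
    (k : ℕ) (hk : k = ⌈(1 - α) * (n + 1 : ℝ)⌉₊)
    (q : Ω → ℝ)
    (hq : ∀ ω, q ω =
      kthSmallest k
        (fun i : Fin n => |U i.castSucc ω - uθ (X i.castSucc ω)| / σ (X i.castSucc ω))) :
    P {ω | uθ (X (Fin.last n) ω) - q ω * σ (X (Fin.last n) ω) ≤ U (Fin.last n) ω ∧
           U (Fin.last n) ω ≤ uθ (X (Fin.last n) ω) + q ω * σ (X (Fin.last n) ω)} ≤
      ENNReal.ofReal (1 - α + 1 / (n + 1 : ℝ)) := by
  set s : Fin (n + 1) → Ω → ℝ := fun i ω => |U i ω - uθ (X i ω)| / σ (X i ω)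
  have hscore : Measurable fun p : (Fin d → ℝ) × ℝ => |p.2 - uθ p.1| / σ p.1 := by fun_prop
  have hk0 : 0 < k := by
    rw [hk, Nat.ceil_pos]
    exact mul_pos (by linarith [hα.2]) (by positivity)
  have hcover :
      {ω | uθ (X (Fin.last n) ω) - q ω * σ (X (Fin.last n) ω) ≤ U (Fin.last n) ω ∧
        U (Fin.last n) ω ≤ uθ (X (Fin.last n) ω) + q ω * σ (X (Fin.last n) ω)}
      ⊆ {ω | s (Fin.last n) ω ≤ kthSmallest k fun i => s i.castSucc ω} := by
    rintro ω ⟨hlo, hhi⟩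
    change s (Fin.last n) ω ≤ _
    rw [← hq]
    exact (div_le_iff₀ (hσpos _)).mpr (abs_le.mpr ⟨by linarith, by linarith⟩)
  have hbound := succ_mul_measure_le_kthSmallest_le hk0 (fun i => hscore.comp (hmeas i))
    (hindep.comp _ fun _ => hscore) (fun i => (hid i _).comp hscore) (hatomless _)
  calc _ ≤ _ := measure_mono hcover
    _ ≤ k / (n + 1) := by
        rw [ENNReal.le_div_iff_mul_le (by simp) (by simp), mul_comm]
        exact hbound
    _ ≤ _ := hk ▸ natCeil_mul_div_le (by linarith [hα.2])

/-- **Scaled conformal prediction upper coverage bound.**  Under the i.i.d. assumptions of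
scaled conformal prediction, if in addition the common distribution of the scaled score
`|U - uθ X| / σ X` is atomless, then the coverage probability is at most
`1 - α + 1/(n+1)`. -/
theorem scaled_cp_upper_coverage
    {Ω : Type*} [MeasurableSpace Ω] (P : Measure Ω) [IsProbabilityMeasure P]
    {d n : ℕ}
    (X : Fin (n + 1) → Ω → (Fin d → ℝ)) (U : Fin (n + 1) → Ω → ℝ)
    (hmeas : ∀ i, Measurable fun ω => (X i ω, U i ω))
    (hindep : iIndepFun (fun i ω => (X i ω, U i ω)) P)
    (hid : ∀ i j, IdentDistrib (fun ω => (X i ω, U i ω)) (fun ω => (X j ω, U j ω)) P P)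
    (uθ : (Fin d → ℝ) → ℝ) (huθ : Measurable uθ)
    (σ : (Fin d → ℝ) → ℝ) (hσmeas : Measurable σ) (hσpos : ∀ x, 0 < σ x)
    (hatomless : ∀ (i : Fin (n + 1)) (c : ℝ),
      P {ω | |U i ω - uθ (X i ω)| / σ (X i ω) = c} = 0)
    (α : ℝ) (hα : α ∈ Set.Ioo (0 : ℝ) 1)
    (k : ℕ) (hk : k = ⌈(1 - α) * (n + 1 : ℝ)⌉₊) (hkn : k ≤ n)
    (q : Ω → ℝ)
    (hq : ∀ ω, q ω =
      kthSmallest k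
        (fun i : Fin n => |U i.castSucc ω - uθ (X i.castSucc ω)| / σ (X i.castSucc ω))) :
    P {ω | uθ (X (Fin.last n) ω) - q ω * σ (X (Fin.last n) ω) ≤ U (Fin.last n) ω ∧
           U (Fin.last n) ω ≤ uθ (X (Fin.last n) ω) + q ω * σ (X (Fin.last n) ω)} ≤
      ENNReal.ofReal (1 - α + 1 / (n + 1 : ℝ)) :=
  scaled_cp_upper_coverage_general P X U hmeas hindep hid uθ huθ σ hσmeas hσpos hatomless α hα k hk
    q hq
end

section
/- Let L_1,...,L_n,L_{n+1} be real random variables whose joint law is exchangeable (invariant under every permutation of the n+1 coordinates), and let 1 ≤ k ≤ n. Let L_(k) denote the k-th smallest value among L_1,...,L_n. Then P( L_{n+1} ≤ L_(k) ) ≥ k/(n+1). -/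
open MeasureTheory ProbabilityTheory

/-! Let `A i` be the event that `L i` has fewer than `k` strictly smaller values among all
`n + 1` scores. On every outcome the `k` smallest scores lie in their events, so at least `k` of
the `A i` occur and their probabilities sum to at least `k`. Exchangeability gives all `A i` the
same probability, and `A (last n)` is exactly the event `L (last n) ≤ L_(k)`. -/

open Finset

section Rank

variable {ι α : Type*} [Fintype ι] [LinearOrder α]

def rankBelow (x : ι → α) (i : ι) : ℕ := #{j | x j < x i}

lemma rankBelow_comp_perm (x : ι → α) (π : Equiv.Perm ι) (i : ι) :
    rankBelow (x ∘ π) i = rankBelow x (π i) := by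
  simp only [rankBelow, card_filter, Function.comp_apply]
  exact Equiv.sum_comp π fun j => if x j < x (π i) then 1 else 0

lemma le_card_rankBelow_lt {k : ℕ} (hk : k ≤ Fintype.card ι) (x : ι → α) :
    k ≤ #{i | rankBelow x i < k} := by
  classical
  set s : Finset ι := {i | rankBelow x i < k}
  rcases sᶜ.eq_empty_or_nonempty with hs | hs
  · rwa [(compl_eq_empty_iff s).1 hs, card_univ]
  -- an index of rank at least `k` with minimal value has all strictly smaller indices in `s`
  obtain ⟨i, hi, hmin⟩ := sᶜ.exists_min_image x hs
  calc k ≤ rankBelow x i := by simpa [s] using hi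
    _ ≤ #s := card_le_card fun j hj => by
      by_contra hjs
      exact (hmin j (mem_compl.2 hjs)).not_gt (mem_filter.1 hj).2

lemma rankBelow_last {n : ℕ} (x : Fin (n + 1) → α) :
    rankBelow x (Fin.last n) = #{j : Fin n | x j.castSucc < x (Fin.last n)} := by
  rw [rankBelow, card_filter, card_filter, Fin.sum_univ_castSucc]
  simp

end Rank

section MeasurableRank

variable {ι α : Type*} [Fintype ι] [LinearOrder α] [MeasurableSpace α] [TopologicalSpace α]
  [OpensMeasurableSpace α] [OrderClosedTopology α] [SecondCountableTopology α]

lemma measurable_rankBelow (i : ι) :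
    Measurable fun x : ι → α => rankBelow x i := by
  simp only [rankBelow, card_filter]
  exact Finset.measurable_sum _ fun j _ =>
    Measurable.ite (measurableSet_lt (measurable_pi_apply j) (measurable_pi_apply i))
      measurable_const measurable_const

lemma measure_rankBelow_lt_eq {Ω : Type*} [MeasurableSpace Ω] (P : Measure Ω)
    {X : Ω → ι → α} (hX : Measurable X)
    (hexch : ∀ π : Equiv.Perm ι, P.map (fun ω => fun i => X ω (π i)) = P.map X)
    (i j : ι) (k : ℕ) :
    P {ω | rankBelow (X ω) i < k} = P {ω | rankBelow (X ω) j < k} := by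
  classical
  have hB : MeasurableSet {x : ι → α | rankBelow x j < k} :=
    measurable_rankBelow j (MeasurableSet.of_discrete (s := {m | m < k}))
  have hXπ : Measurable fun ω => fun l => X ω (Equiv.swap i j l) :=
    measurable_pi_lambda _ fun l => (measurable_pi_apply _).comp hX
  have hpre : (fun ω => fun l => X ω (Equiv.swap i j l)) ⁻¹' {x | rankBelow x j < k}
      = {ω | rankBelow (X ω) i < k} := by
    ext ω
    change rankBelow (X ω ∘ Equiv.swap i j) j < k ↔ rankBelow (X ω) i < k
    rw [rankBelow_comp_perm, Equiv.swap_apply_right]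
  rw [← hpre, ← Measure.map_apply hXπ hB, hexch, Measure.map_apply hX hB]
  rfl

end MeasurableRank

lemma le_kthSmallest_iff {m k : ℕ} (hk1 : 1 ≤ k) (hkm : k ≤ m) (g : Fin m → ℝ) (c : ℝ) :
    c ≤ kthSmallest k g ↔ #{j | g j < c} < k := by
  obtain ⟨a, ha⟩ := (Set.finite_range g).bddBelow
  obtain ⟨b, hb⟩ := (Set.finite_range g).bddAbove
  have hbdd : BddBelow {t : ℝ | k ≤ #{i | g i ≤ t}} := ⟨a, fun t ht => by
    obtain ⟨i, hi⟩ := card_pos.1 (hk1.trans ht)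
    exact (ha ⟨i, rfl⟩).trans (mem_filter.1 hi).2⟩
  have hne : {t : ℝ | k ≤ #{i | g i ≤ t}}.Nonempty := ⟨b, by
    simpa [fun i => hb ⟨i, rfl⟩] using hkm⟩
  rw [kthSmallest, le_csInf_iff hbdd hne]
  constructor
  · intro h
    by_contra! hk
    obtain ⟨i, hi, hmax⟩ := exists_max_image _ g (card_pos.1 (hk1.trans hk))
    refine (h (g i) ?_).not_gt (mem_filter.1 hi).2
    exact hk.trans (card_le_card fun j hj => mem_filter.2 ⟨mem_univ j, hmax j hj⟩)
  · intro h t ht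
    by_contra! htc
    exact (ht.trans (card_le_card fun j hj =>
      mem_filter.2 ⟨mem_univ j, (mem_filter.1 hj).2.trans_lt htc⟩)).not_gt h

open Classical in
lemma natCast_mul_measure_univ_le_sum {Ω ι : Type*} [Fintype ι] [MeasurableSpace Ω]
    (μ : Measure Ω) {A : ι → Set Ω} (hA : ∀ i, MeasurableSet (A i)) {k : ℕ}
    (hk : ∀ ω, k ≤ #{i | ω ∈ A i}) :
    k * μ Set.univ ≤ ∑ i, μ (A i) := by
  calc (k : ENNReal) * μ Set.univ = ∫⁻ _, (k : ENNReal) ∂μ := (lintegral_const _).symm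
    _ ≤ ∫⁻ ω, ∑ i, (A i).indicator 1 ω ∂μ := lintegral_mono fun ω => by
      have hcount : (#{i | ω ∈ A i} : ENNReal) = ∑ i, (A i).indicator 1 ω := by
        rw [card_filter]
        push_cast
        simp only [Set.indicator_apply, Pi.one_apply]
      exact hcount ▸ Nat.cast_le.2 (hk ω)
    _ = ∑ i, μ (A i) := by
      rw [lintegral_finsetSum _ fun i _ => measurable_one.indicator (hA i)]
      exact sum_congr rfl fun i _ => lintegral_indicator_one (hA i)

/-- **Conformal rank lemma.**  If `L 0, …, L n` are real random variables whose joint law is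
exchangeable, and `1 ≤ k ≤ n`, then the last variable is at most the `k`-th smallest of the
first `n` with probability at least `k/(n+1)`. -/
theorem exchangeable_rank_lemma
    {Ω : Type*} [MeasurableSpace Ω] (P : Measure Ω) [IsProbabilityMeasure P]
    {n : ℕ} (L : Fin (n + 1) → Ω → ℝ)
    (hmeas : ∀ i, Measurable (L i))
    (hexch : ∀ π : Equiv.Perm (Fin (n + 1)),
      P.map (fun ω => fun i => L (π i) ω) = P.map (fun ω => fun i => L i ω))
    (k : ℕ) (hk1 : 1 ≤ k) (hkn : k ≤ n) :
    (k : ENNReal) / (n + 1) ≤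
      P {ω | L (Fin.last n) ω ≤ kthSmallest k (fun i : Fin n => L i.castSucc ω)} := by
  set X : Ω → Fin (n + 1) → ℝ := fun ω i => L i ω
  have hX : Measurable X := measurable_pi_lambda _ hmeas
  set A : Fin (n + 1) → Set Ω := fun i => {ω | rankBelow (X ω) i < k}
  have hA (i) : MeasurableSet (A i) :=
    (measurable_rankBelow i).comp hX (MeasurableSet.of_discrete (s := {m | m < k}))
  have htarget : {ω | L (Fin.last n) ω ≤ kthSmallest k (fun i : Fin n => L i.castSucc ω)}
      = A (Fin.last n) := by
    ext ω
    simp only [Set.mem_ofPred_eq, le_kthSmallest_iff hk1 hkn, A, rankBelow_last, X]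
  have hcount (ω) : k ≤ #{i | ω ∈ A i} :=
    le_card_rankBelow_lt (by simpa using hkn.trans n.le_succ) (X ω)
  rw [htarget]
  refine ENNReal.div_le_of_le_mul ?_
  calc (k : ENNReal) ≤ ∑ i, P (A i) := by
        simpa using natCast_mul_measure_univ_le_sum P hA fun ω => by convert hcount ω
    _ = ∑ _i : Fin (n + 1), P (A (Fin.last n)) :=
        sum_congr rfl fun i _ => measure_rankBelow_lt_eq P hX hexch i _ k
    _ = P (A (Fin.last n)) * (n + 1) := by simp [mul_comm]
end
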